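/- arXiv:2001.10197 — 7 statements merged into one kernel-verified Lean document; each statement's English description precedes it below -/
import Mathlib

section
/- Let a ∈ J^n \ {0}. Two players i, h ∈ N are equivalent in the point-veto game u^a if and only if a_i = a_h. -/
open Finset BigOperators

attribute [local instance] Classical.propDecidable

noncomputable section

variable {n j k : ℕ}

/-- The top element `j-1` of `Fin j`. -/
def topF (j : ℕ) [NeZero j] : Fin j :=
  ⟨j - 1, Nat.sub_lt (Nat.pos_of_ne_zero (NeZero.ne j)) one_pos⟩

/-- The profile equal to the constant `c` on `S` and to `x` off `S`. -/
def mer (S : Finset (Fin n)) (c : Fin j) (x : Fin n → Fin j) : Fin n → Fin j :=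
  fun i => if i ∈ S then c else x i

/-- `(j,k)` simple game: `v 0 = 0`, `v (j-1,…,j-1) = k-1`, monotone. -/
def IsJKGame [NeZero j] [NeZero k] (v : (Fin n → Fin j) → Fin k) : Prop :=
  v (fun _ => 0) = 0 ∧ v (fun _ => topF j) = topF k ∧
    ∀ x y : Fin n → Fin j, (∀ i, x i ≤ y i) → v x ≤ v y

/-- The `(j,k)` simple game with point-veto `a`. -/
def uA [NeZero j] [NeZero k] (a : Fin n → Fin j) (x : Fin n → Fin j) : Fin k :=
  if ∀ i, a i ≤ x i then topF k else 0

/-- The veto game associated with a set `E` of thresholds. -/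
def uE [NeZero j] [NeZero k] (E : Set (Fin n → Fin j)) (x : Fin n → Fin j) : Fin k :=
  if ∃ a ∈ E, ∀ i, a i ≤ x i then topF k else 0

/-- Player `i` is a null player of `v`. -/
def NullPlayer [NeZero j] [NeZero k] (v : (Fin n → Fin j) → Fin k) (i : Fin n) : Prop :=
  ∀ (x : Fin n → Fin j) (y : Fin j), v x = v (Function.update x i y)

/-- Players `i` and `h` are equivalent in `v`. -/
def EquivPlayers [NeZero j] [NeZero k] (v : (Fin n → Fin j) → Fin k) (i h : Fin n) : Prop :=
  ∀ x : Fin n → Fin j, v x = v (x ∘ Equiv.swap i h)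

/-- The average game `ṽ(T) = (1/(jⁿ(k-1))) Σ_x [v((j-1)_T, x_{-T}) - v(0_T, x_{-T})]`. -/
def Cfun [NeZero j] [NeZero k] (v : (Fin n → Fin j) → Fin k) (T : Finset (Fin n)) : ℝ :=
  (1 / ((j : ℝ) ^ n * ((k : ℝ) - 1))) *
    ∑ x : Fin n → Fin j,
      (((v (mer T (topF j) x)).val : ℝ) - ((v (mer T 0 x)).val : ℝ))

/-- The Shapley-Shubik index for `(j,k)` simple games. -/
def Phi [NeZero j] [NeZero k] (v : (Fin n → Fin j) → Fin k) (i : Fin n) : ℝ :=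
  ∑ S ∈ univ.filter (fun S : Finset (Fin n) => i ∈ S),
    ((Nat.factorial (S.card - 1) * Nat.factorial (n - S.card) : ℝ) / (Nat.factorial n : ℝ)) *
      (Cfun v S - Cfun v (S.erase i))

/-- The TU game `v_a(S) = (1/(k-1))[v((j-1)_S, a_{-S}) - v(0_S, a_{-S})]`. -/
def vAgame [NeZero j] [NeZero k] (v : (Fin n → Fin j) → Fin k) (a : Fin n → Fin j)
    (S : Finset (Fin n)) : ℝ :=
  (1 / ((k : ℝ) - 1)) * (((v (mer S (topF j) a)).val : ℝ) - ((v (mer S 0 a)).val : ℝ))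

/-- The parametric power index `Φ^a`. -/
def PhiA [NeZero j] [NeZero k] (v : (Fin n → Fin j) → Fin k) (a : Fin n → Fin j) (i : Fin n) : ℝ :=
  ∑ S ∈ univ.filter (fun S : Finset (Fin n) => i ∈ S),
    ((Nat.factorial (S.card - 1) * Nat.factorial (n - S.card) : ℝ) / (Nat.factorial n : ℝ)) *
      (vAgame v a S - vAgame v a (S.erase i))

/-- The game `w^C`: value `k-1` iff all members of `C` give full support. -/
def wCgame [NeZero j] [NeZero k] (C : Finset (Fin n)) : (Fin n → Fin j) → Fin k :=
  uA (fun i => if i ∈ C then topF j else 0)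

/-- The unanimity TU game `γ_S`. -/
def gammaTU (S T : Finset (Fin n)) : ℝ :=
  if S ⊆ T then 1 else 0

end

theorem topF_ne_zero {k : ℕ} [NeZero k] (hk : 2 ≤ k) : topF k ≠ 0 := by
  intro hc
  have := congrArg Fin.val hc
  simp only [topF, Fin.val_zero] at this
  omega

theorem Function.comp_swap_eq_self_iff {α β : Type*} [DecidableEq α] (f : α → β) (i h : α) :
    f ∘ Equiv.swap i h = f ↔ f i = f h := by
  refine ⟨fun hf => ?_, fun hf => funext fun m => ?_⟩
  · simpa using (congrFun hf i).symm
  · rcases eq_or_ne m i with rfl | hmi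
    · simp [hf]
    rcases eq_or_ne m h with rfl | hmh
    · simp [hf]
    · simp [Equiv.swap_apply_of_ne_of_ne hmi hmh]

section PointVeto

variable {n j k : ℕ} [NeZero j] [NeZero k]

theorem uA_comp_perm (a x : Fin n → Fin j) (σ : Equiv.Perm (Fin n)) :
    (uA (a ∘ σ) (x ∘ σ) : Fin k) = uA a x := by
  simp only [uA, Function.comp_apply, σ.forall_congr_right (q := fun m => a m ≤ x m)]

theorem equivPlayers_uA_iff (hk : 2 ≤ k) (a : Fin n → Fin j) (i h : Fin n) :
    EquivPlayers (uA a : (Fin n → Fin j) → Fin k) i h ↔ a ∘ Equiv.swap i h = a := by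
  set σ := Equiv.swap i h
  constructor
  · intro hv
    -- `a` clears its own veto, so `a ∘ σ` must as well; `σ` being an involution gives equality.
    have hle : ∀ m, a m ≤ a (σ m) := by
      have hwin := hv a
      simp only [uA, le_refl, implies_true, if_true] at hwin
      by_contra hlose
      exact topF_ne_zero hk (hwin.trans (if_neg hlose))
    exact funext fun m => le_antisymm (by simpa [σ] using hle (σ m)) (hle m)
  · intro hσ x
    conv_rhs => rw [← hσ]
    exact (uA_comp_perm a x σ).symm

end PointVeto

theorem stmt1_general {n j k : ℕ} [NeZero j] [NeZero k] (hk : 2 ≤ k)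
    (a : Fin n → Fin j) (i h : Fin n) :
    EquivPlayers (uA a : (Fin n → Fin j) → Fin k) i h ↔ a i = a h :=
  (equivPlayers_uA_iff hk a i h).trans (Function.comp_swap_eq_self_iff a i h)

theorem stmt1 {n j k : ℕ} [NeZero j] [NeZero k] (hj : 2 ≤ j) (hk : 2 ≤ k)
    (a : Fin n → Fin j) (ha : a ≠ 0) (i h : Fin n) :
    EquivPlayers (uA a : (Fin n → Fin j) → Fin k) i h ↔ a i = a h :=
  stmt1_general hk a i h
end

section
/- Every (j,k) simple game v is a convex combination of veto games: there exist p ≥ 1, nonnegative reals α_1,...,α_p summing to 1, and non-empty sets F_1,...,F_p ⊆ J^n such that v(x) = Σ_{t=1}^p α_t · u^{F_t}(x) for all x ∈ J^n. -/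
/-!
Layer-cake decomposition: since `v` takes values in `{0, …, k-1}`, it is the sum over the
thresholds `t = 0, …, k-2` of the indicators of the superlevel sets `{a | t < v a}`. By
monotonicity of `v` these sets are upper sets, and the veto game of an upper set is `k-1` times
its indicator, so `v` is the uniform average of these `k-1` veto games.
-/

open Finset BigOperators

attribute [local instance] Classical.propDecidable

lemma topF_val (j : ℕ) [NeZero j] : (topF j).val = j - 1 := rfl

lemma uE_val_of_isUpperSet {n j k : ℕ} [NeZero j] [NeZero k] {E : Set (Fin n → Fin j)}
    (hE : IsUpperSet E) (x : Fin n → Fin j) :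
    ((uE E x : Fin k).val : ℝ) = if x ∈ E then (k : ℝ) - 1 else 0 := by
  have hmem : (∃ a ∈ E, ∀ i, a i ≤ x i) ↔ x ∈ E :=
    ⟨fun ⟨a, ha, hax⟩ => hE (Pi.le_def.mpr hax) ha, fun hx => ⟨x, hx, fun _ => le_rfl⟩⟩
  simp only [uE, hmem]
  split_ifs <;> simp [topF_val, Nat.cast_sub NeZero.one_le]

lemma sum_fin_ite_lt_eq {N m : ℕ} (hm : m ≤ N) :
    ∑ t : Fin N, (if (t : ℕ) < m then (1 : ℝ) else 0) = m := by
  rw [Fin.sum_univ_eq_sum_range (fun t => if t < m then (1 : ℝ) else 0), sum_boole]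
  have : {t ∈ range N | t < m} = range m := by
    ext t; simp only [mem_filter, mem_range]; omega
  rw [this, card_range]

lemma IsJKGame.monotone {n j k : ℕ} [NeZero j] [NeZero k] {v : (Fin n → Fin j) → Fin k}
    (hv : IsJKGame v) : Monotone v :=
  fun x y hxy => hv.2.2 x y hxy

lemma Monotone.isUpperSet_setOf_lt_val {α : Type*} [Preorder α] {k : ℕ} {v : α → Fin k}
    (hv : Monotone v) (t : ℕ) : IsUpperSet {a | t < (v a).val} :=
  fun _ _ hab (ha : t < _) => show t < _ from ha.trans_le (hv hab)

theorem stmt4_general {n j k : ℕ} [NeZero j] [NeZero k] (hk : 2 ≤ k)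
    (v : (Fin n → Fin j) → Fin k) (hv : IsJKGame v) :
    ∃ (p : ℕ) (_ : 1 ≤ p) (α : Fin p → ℝ) (F : Fin p → Set (Fin n → Fin j)),
      (∀ t, 0 ≤ α t) ∧ (∑ t, α t = 1) ∧ (∀ t, (F t).Nonempty) ∧
        ∀ x : Fin n → Fin j,
          ((v x).val : ℝ) = ∑ t, α t * ((uE (F t) x : Fin k).val : ℝ) := by
  have hk1 : 0 < (k : ℝ) - 1 := by
    have : (2 : ℝ) ≤ k := by exact_mod_cast hk
    linarith
  refine ⟨k - 1, by omega, fun _ => 1 / ((k : ℝ) - 1), fun t => {a | (t : ℕ) < (v a).val},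
    fun _ => (one_div_pos.mpr hk1).le, ?_, fun t => ⟨fun _ => topF j, ?_⟩, fun x => ?_⟩
  · rw [sum_const, card_univ, Fintype.card_fin, nsmul_eq_mul, Nat.cast_sub NeZero.one_le,
      Nat.cast_one, mul_one_div_cancel hk1.ne']
  · show (t : ℕ) < (v fun _ => topF j).val
    rw [hv.2.1, topF_val]
    exact t.isLt
  · simp_rw [uE_val_of_isUpperSet (hv.monotone.isUpperSet_setOf_lt_val _), Set.mem_ofPred_eq,
      mul_ite, one_div_mul_cancel hk1.ne', mul_zero]
    exact (sum_fin_ite_lt_eq (Nat.le_sub_one_of_lt (v x).isLt)).symm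

theorem stmt4 {n j k : ℕ} [NeZero j] [NeZero k] (hj : 2 ≤ j) (hk : 2 ≤ k)
    (v : (Fin n → Fin j) → Fin k) (hv : IsJKGame v) :
    ∃ (p : ℕ) (_ : 1 ≤ p) (α : Fin p → ℝ) (F : Fin p → Set (Fin n → Fin j)),
      (∀ t, 0 ≤ α t) ∧ (∑ t, α t = 1) ∧ (∀ t, (F t).Nonempty) ∧
        ∀ x : Fin n → Fin j,
          ((v x).val : ℝ) = ∑ t, α t * ((uE (F t) x : Fin k).val : ℝ) :=
  stmt4_general hk v hv
end

section
/- The Shapley-Shubik index Φ for (j,k) simple games is efficient: for every (j,k) simple game v with n players, Σ_{i=1}^n Φ_i(v) = 1. -/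
open Finset BigOperators

attribute [local instance] Classical.propDecidable

/-!
The index is the Shapley value of the TU game `T ↦ Cfun v T`, and the Shapley value of any TU game
`f` sums to `f univ - f ∅`: regrouping by coalitions, `f S` appears with coefficient
`|S|·w(|S|) - (n-|S|)·w(|S|+1)`, which telescopes to `[S = univ] - [S = ∅]`. For a `(j,k)` simple
game, `Cfun v ∅ = 0` because `mer ∅` is the identity, and `Cfun v univ = 1` because every summand
is `v(j-1,…,j-1) - v(0,…,0) = k - 1`.
-/

noncomputable def shapleyWeight (n s : ℕ) : ℝ :=
  ((s - 1).factorial * (n - s).factorial : ℝ) / n.factorial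

lemma natCast_mul_shapleyWeight {n s : ℕ} (hs : 0 < s) :
    (s : ℝ) * shapleyWeight n s = (s.factorial * (n - s).factorial : ℝ) / n.factorial := by
  rw [shapleyWeight, mul_div_assoc', ← mul_assoc, ← Nat.cast_mul, Nat.mul_factorial_pred hs.ne']

lemma natCast_sub_mul_shapleyWeight_succ {n s : ℕ} (hs : s < n) :
    ((n - s : ℕ) : ℝ) * shapleyWeight n (s + 1) =
      (s.factorial * (n - s).factorial : ℝ) / n.factorial := by
  rw [shapleyWeight, Nat.add_sub_cancel, Nat.sub_add_eq, mul_div_assoc', mul_left_comm,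
    ← Nat.cast_mul, Nat.mul_factorial_pred (by omega)]

lemma natCast_mul_shapleyWeight_sub_mul_succ {n s : ℕ} (hs : s ≤ n) :
    (s : ℝ) * shapleyWeight n s - ((n - s : ℕ) : ℝ) * shapleyWeight n (s + 1) =
      (if s = n then 1 else 0) - (if s = 0 then 1 else 0) := by
  have hfac : (n.factorial : ℝ) ≠ 0 := by positivity
  rcases Nat.eq_zero_or_pos s with rfl | hs0
  · rcases Nat.eq_zero_or_pos n with rfl | hn
    · simp
    · rw [natCast_sub_mul_shapleyWeight_succ hn]
      simp [hn.ne, hfac]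
  rcases hs.eq_or_lt with rfl | hsn
  · rw [natCast_mul_shapleyWeight hs0]
    simp [hs0.ne', hfac]
  · rw [natCast_mul_shapleyWeight hs0, natCast_sub_mul_shapleyWeight_succ hsn]
    simp [hsn.ne, hs0.ne']

section ShapleyValue

variable {ι : Type*} [Fintype ι]

noncomputable def shapleyValue (f : Finset ι → ℝ) (i : ι) : ℝ :=
  ∑ S ∈ univ.filter (fun S => i ∈ S),
    shapleyWeight (Fintype.card ι) S.card * (f S - f (S.erase i))

lemma sum_sum_filter_mem (g : Finset ι → ℝ) :
    ∑ i, ∑ S ∈ univ.filter (fun S => i ∈ S), g S = ∑ S, (S.card : ℝ) * g S := by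
  simp only [sum_filter]
  rw [sum_comm]
  refine sum_congr rfl fun S _ => ?_
  rw [sum_ite_mem, univ_inter, sum_const, nsmul_eq_mul]

lemma sum_sum_filter_not_mem (g : Finset ι → ℝ) :
    ∑ i, ∑ S ∈ univ.filter (fun S => i ∉ S), g S =
      ∑ S, ((Fintype.card ι - S.card : ℕ) : ℝ) * g S := by
  rw [sum_comm' (t' := univ) (s' := fun S => Sᶜ) (by simp)]
  simp [card_compl]

lemma sum_filter_mem_erase (i : ι) (g : Finset ι → ℕ → ℝ) :
    ∑ S ∈ univ.filter (fun S : Finset ι => i ∈ S), g (S.erase i) S.card =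
      ∑ T ∈ univ.filter (fun T : Finset ι => i ∉ T), g T (T.card + 1) := by
  refine sum_nbij' (fun S => S.erase i) (insert i) (by simp) (by simp)
    (fun S hS => insert_erase (by simpa using hS)) (fun T hT => erase_insert (by simpa using hT))
    fun S hS => ?_
  rw [card_erase_add_one (by simpa using hS)]

theorem sum_shapleyValue (f : Finset ι → ℝ) :
    ∑ i, shapleyValue f i = f univ - f ∅ := by
  set n := Fintype.card ι with hn
  calc ∑ i, shapleyValue f i
      = ∑ i, ∑ S ∈ univ.filter (fun S => i ∈ S), shapleyWeight n S.card * f S -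
          ∑ i, ∑ S ∈ univ.filter (fun S => i ∉ S), shapleyWeight n (S.card + 1) * f S := by
        simp only [shapleyValue, mul_sub, sum_sub_distrib]
        rw [sum_congr rfl fun i _ => sum_filter_mem_erase i fun T s => shapleyWeight n s * f T]
    _ = ∑ S, ((S.card : ℝ) * shapleyWeight n S.card -
          ((n - S.card : ℕ) : ℝ) * shapleyWeight n (S.card + 1)) * f S := by
        simp only [sum_sum_filter_mem, sum_sum_filter_not_mem, ← hn, sub_mul, sum_sub_distrib,
          mul_assoc]
    _ = ∑ S, ((if S = univ then f S else 0) - if S = ∅ then f S else 0) := by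
        refine sum_congr rfl fun S _ => ?_
        rw [natCast_mul_shapleyWeight_sub_mul_succ (n := n) (card_le_univ S), hn]
        simp only [card_eq_iff_eq_univ, card_eq_zero]
        split_ifs <;> ring
    _ = f univ - f ∅ := by simp [sum_sub_distrib]

end ShapleyValue

variable {n j k : ℕ} [NeZero j] [NeZero k]

lemma Phi_eq_shapleyValue (v : (Fin n → Fin j) → Fin k) : Phi v = shapleyValue (Cfun v) := by
  ext i
  simp only [Phi, shapleyValue, shapleyWeight, Fintype.card_fin]
  -- the two sides differ only in their decidability instances
  convert rfl

lemma Cfun_empty (v : (Fin n → Fin j) → Fin k) : Cfun v ∅ = 0 := by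
  have hmer (c : Fin j) (x : Fin n → Fin j) : mer ∅ c x = x := by
    funext i
    simp [mer]
  simp [Cfun, hmer]

lemma Cfun_univ (hk : 1 < k) {v : (Fin n → Fin j) → Fin k}
    (hv0 : v (fun _ => 0) = 0) (hv1 : v (fun _ => topF j) = topF k) : Cfun v univ = 1 := by
  have hmer (c : Fin j) (x : Fin n → Fin j) : mer univ c x = fun _ => c := by
    funext i
    simp [mer]
  have htop : ((topF k : ℕ) : ℝ) = k - 1 := by
    rw [topF, Nat.cast_pred (by omega)]
  have hj : (j : ℝ) ≠ 0 := Nat.cast_ne_zero.mpr (NeZero.ne j)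
  have hk' : (k : ℝ) - 1 ≠ 0 := by
    rw [sub_ne_zero]
    exact_mod_cast hk.ne'
  simp only [Cfun, hmer, hv0, hv1, htop, Fin.val_zero, Nat.cast_zero, sub_zero, sum_const,
    card_univ, Fintype.card_fun, Fintype.card_fin, nsmul_eq_mul, Nat.cast_pow]
  field_simp

theorem stmt6_general {n j k : ℕ} [NeZero j] [NeZero k] (hk : 2 ≤ k)
    (v : (Fin n → Fin j) → Fin k) (hv : IsJKGame v) :
    ∑ i : Fin n, Phi v i = 1 := by
  obtain ⟨hv0, hv1, -⟩ := hv
  rw [Phi_eq_shapleyValue, sum_shapleyValue, Cfun_univ hk hv0 hv1, Cfun_empty, sub_zero]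

theorem stmt6 {n j k : ℕ} [NeZero j] [NeZero k] (hj : 2 ≤ j) (hk : 2 ≤ k)
    (v : (Fin n → Fin j) → Fin k) (hv : IsJKGame v) :
    ∑ i : Fin n, Phi v i = 1 :=
  stmt6_general hk v hv
end

section
/- The Shapley-Shubik index Φ for (j,k) simple games is symmetric: if players i and h are equivalent in v (i.e., v(x) = v(π_{ih} x) for all x ∈ J^n, where π_{ih} swaps coordinates i and h), then Φ_i(v) = Φ_h(v). -/
open Finset BigOperators

attribute [local instance] Classical.propDecidable

variable {n j k : ℕ}

theorem mer_map_comp (σ : Equiv.Perm (Fin n)) (T : Finset (Fin n)) (c : Fin j)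
    (x : Fin n → Fin j) :
    mer (T.map σ.toEmbedding) c x ∘ σ = mer T c (x ∘ σ) := by
  funext y
  simp [mer]

section Anonymity

variable [NeZero j] [NeZero k] {v : (Fin n → Fin j) → Fin k} {σ : Equiv.Perm (Fin n)}

theorem Cfun_map_perm (hσ : ∀ x, v x = v (x ∘ σ)) (T : Finset (Fin n)) :
    Cfun v (T.map σ.toEmbedding) = Cfun v T := by
  have hmer (c : Fin j) (x : Fin n → Fin j) :
      v (mer (T.map σ.toEmbedding) c x) = v (mer T c (x ∘ σ)) := by
    rw [hσ, mer_map_comp]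
  unfold Cfun
  simp only [hmer]
  congr 1
  exact (σ.symm.arrowCongr (Equiv.refl (Fin j))).sum_comp
    fun x => ((v (mer T (topF j) x)).val : ℝ) - (v (mer T 0 x)).val

theorem Phi_perm_apply (hσ : ∀ x, v x = v (x ∘ σ)) (i : Fin n) :
    Phi v (σ i) = Phi v i := by
  unfold Phi
  symm
  refine Finset.sum_equiv σ.finsetCongr (fun S => by simp) fun S _ => ?_
  rw [Equiv.finsetCongr_apply, card_map, ← Equiv.coe_toEmbedding, ← map_erase,
    Cfun_map_perm hσ, Cfun_map_perm hσ]

end Anonymity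

theorem stmt8_general {n j k : ℕ} [NeZero j] [NeZero k]
    (v : (Fin n → Fin j) → Fin k) (i h : Fin n)
    (heq : EquivPlayers v i h) :
    Phi v i = Phi v h := by
  simpa using (Phi_perm_apply heq i).symm

theorem stmt8 {n j k : ℕ} [NeZero j] [NeZero k] (hj : 2 ≤ j) (hk : 2 ≤ k)
    (v : (Fin n → Fin j) → Fin k) (hv : IsJKGame v) (i h : Fin n)
    (heq : EquivPlayers v i h) :
    Phi v i = Phi v h :=
  stmt8_general v i h heq
end

section
/- If players i and h are equivalent in a (j,k) simple game v, then they are equivalent in the average game: ṽ(S ∪ {i}) = ṽ(S ∪ {h}) for all S ⊆ N \ {i, h}. -/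
open Finset BigOperators

attribute [local instance] Classical.propDecidable

section Relabelling

variable {n j : ℕ}

theorem mer_comp_perm (T : Finset (Fin n)) (c : Fin j) (x : Fin n → Fin j)
    (σ : Equiv.Perm (Fin n)) :
    mer T c x ∘ σ = mer (T.map σ.symm.toEmbedding) c (x ∘ σ) := by
  funext p
  simp [mer, mem_map_equiv]

/-- Reindexing the sum over profiles by `x ↦ x ∘ σ` turns the sum defining `Cfun v T` into the
one defining `Cfun v (σ⁻¹ T)`. -/
theorem Cfun_map_perm_of_invariant {k : ℕ} [NeZero j] [NeZero k]
    (v : (Fin n → Fin j) → Fin k) (σ : Equiv.Perm (Fin n)) (hσ : ∀ x, v x = v (x ∘ σ))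
    (T : Finset (Fin n)) :
    Cfun v (T.map σ.symm.toEmbedding) = Cfun v T := by
  have hv : ∀ c x, v (mer (T.map σ.symm.toEmbedding) c (x ∘ σ)) = v (mer T c x) := by
    intro c x
    rw [← mer_comp_perm, ← hσ]
  unfold Cfun
  congr 1
  rw [← Equiv.sum_comp (σ.symm.arrowCongr (Equiv.refl (Fin j)))]
  refine Fintype.sum_congr _ _ fun x => ?_
  have hx : σ.symm.arrowCongr (Equiv.refl (Fin j)) x = x ∘ σ := by
    funext p
    simp
  rw [hx, hv, hv]

theorem map_swap_insert (S : Finset (Fin n)) {i h : Fin n} (hi : i ∉ S) (hh : h ∉ S) :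
    (insert i S).map (Equiv.swap i h).toEmbedding = insert h S := by
  have hS : S.image (Equiv.swap i h) = S.image id := image_congr fun p hp =>
    Equiv.swap_apply_of_ne_of_ne (ne_of_mem_of_not_mem hp hi) (ne_of_mem_of_not_mem hp hh)
  rw [map_insert, Equiv.coe_toEmbedding, Equiv.swap_apply_left, map_eq_image,
    Equiv.coe_toEmbedding, hS, image_id]

end Relabelling

theorem stmt12_general {n j k : ℕ} [NeZero j] [NeZero k]
    (v : (Fin n → Fin j) → Fin k) (i h : Fin n)
    (heq : EquivPlayers v i h) :
    ∀ S : Finset (Fin n), i ∉ S → h ∉ S →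
      Cfun v (insert i S) = Cfun v (insert h S) := by
  intro S hiS hhS
  rw [← Cfun_map_perm_of_invariant v (Equiv.swap i h) heq (insert h S), Equiv.symm_swap,
    Equiv.swap_comm, map_swap_insert S hhS hiS]

theorem stmt12 {n j k : ℕ} [NeZero j] [NeZero k] (hj : 2 ≤ j) (hk : 2 ≤ k)
    (v : (Fin n → Fin j) → Fin k) (hv : IsJKGame v) (i h : Fin n)
    (heq : EquivPlayers v i h) :
    ∀ S : Finset (Fin n), i ∉ S → h ∉ S →
      Cfun v (insert i S) = Cfun v (insert h S) :=
  stmt12_general v i h heq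
end

section
/- For a ∈ J^n \ {0} and any coalition S ⊊ N: the average game of the point-veto game u^a satisfies ũ^a(S) = Π_{i ∈ N\S} (j − a_i)/j if S ∩ N^a ≠ ∅, and ũ^a(S) = 0 if S ∩ N^a = ∅. -/
open Finset BigOperators

attribute [local instance] Classical.propDecidable

/-!
Raising the coalition `S` to `j - 1` makes `u^a` equal to `k - 1` exactly on the profiles with
`a_i ≤ x_i` for every `i ∉ S`; lowering `S` to `0` makes `u^a` vanish as soon as some `i ∈ S` has
`a_i > 0`, and changes nothing when `a` vanishes on `S`. Counting those profiles coordinatewise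
gives `j ^ |S| * ∏_{i ∉ S} (j - a_i)`, and dividing by `j ^ n` leaves the product formula.
-/

lemma topF_val_cast (k : ℕ) [NeZero k] : ((topF k).val : ℝ) = k - 1 := by
  rw [topF, Nat.cast_sub NeZero.one_le, Nat.cast_one]

lemma le_topF {j : ℕ} [NeZero j] (y : Fin j) : y ≤ topF j :=
  Fin.le_def.2 (Nat.le_sub_one_of_lt y.isLt)

lemma card_filter_forall_notMem_le {n j : ℕ} (a : Fin n → Fin j) (S : Finset (Fin n)) :
    #{x : Fin n → Fin j | ∀ i ∉ S, a i ≤ x i} = j ^ #S * ∏ i ∈ Sᶜ, (j - a i) := by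
  have : ({x : Fin n → Fin j | ∀ i ∉ S, a i ≤ x i} : Finset _) =
      Fintype.piFinset fun i => if i ∈ S then univ else Ici (a i) := by
    ext x
    simp only [mem_filter, mem_univ, true_and, Fintype.mem_piFinset]
    refine forall_congr' fun i => ?_
    by_cases hi : i ∈ S <;> simp [hi]
  rw [this, Fintype.card_piFinset, ← prod_mul_prod_compl S]
  congr 1
  · simp +contextual
  · refine prod_congr rfl fun i hi => ?_
    simp [mem_compl.1 hi]

section PointVeto

variable {n j k : ℕ} [NeZero j] [NeZero k] {a : Fin n → Fin j} {S : Finset (Fin n)} {c : Fin j}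

lemma uA_mer_of_forall_le (h : ∀ i ∈ S, a i ≤ c) (x : Fin n → Fin j) :
    (uA a (mer S c x) : Fin k) = if ∀ i ∉ S, a i ≤ x i then topF k else 0 := by
  refine if_congr ⟨fun hx i hi => ?_, fun hx i => ?_⟩ rfl rfl
  · simpa [mer, hi] using hx i
  · by_cases hi : i ∈ S <;> simp [mer, hi, h, hx]

lemma uA_mer_of_exists_lt (h : ∃ i ∈ S, c < a i) (x : Fin n → Fin j) :
    (uA a (mer S c x) : Fin k) = 0 := by
  obtain ⟨i, hi, hlt⟩ := h
  exact if_neg fun hx => absurd hlt (not_lt.2 (by simpa [mer, hi] using hx i))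

lemma cfun_uA_of_forall_eq_zero (h : ∀ i ∈ S, a i = 0) :
    Cfun (uA a : (Fin n → Fin j) → Fin k) S = 0 := by
  have hle : ∀ c : Fin j, ∀ i ∈ S, a i ≤ c := fun c i hi => by simp [h i hi]
  simp [Cfun, uA_mer_of_forall_le (hle _)]

lemma cfun_uA_of_exists_ne_zero (hk : 2 ≤ k) (h : ∃ i ∈ S, a i ≠ 0) :
    Cfun (uA a : (Fin n → Fin j) → Fin k) S =
      #{x : Fin n → Fin j | ∀ i ∉ S, a i ≤ x i} / (j : ℝ) ^ n := by
  have hpos : ∃ i ∈ S, 0 < a i := h.imp fun i ⟨hi, ha⟩ => ⟨hi, Fin.pos_iff_ne_zero.2 ha⟩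
  have hk1 : (k : ℝ) - 1 ≠ 0 := by
    have : (2 : ℝ) ≤ k := by exact_mod_cast hk
    linarith
  simp only [Cfun, uA_mer_of_forall_le (fun i _ => le_topF (a i)), uA_mer_of_exists_lt hpos]
  have hterm : ∀ x : Fin n → Fin j,
      (((if ∀ i ∉ S, a i ≤ x i then topF k else 0 : Fin k).val : ℝ) - ((0 : Fin k).val : ℝ)) =
        (k - 1) * if ∀ i ∉ S, a i ≤ x i then 1 else 0 := by
    intro x
    split_ifs <;> simp [topF_val_cast]
  rw [sum_congr rfl fun x _ => hterm x, ← mul_sum, sum_boole]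
  field_simp

end PointVeto

theorem stmt14_general {n j k : ℕ} [NeZero j] [NeZero k] (hk : 2 ≤ k)
    (a : Fin n → Fin j) (S : Finset (Fin n)) :
    ((∃ i ∈ S, a i ≠ 0) →
        Cfun (uA a : (Fin n → Fin j) → Fin k) S =
          ∏ i ∈ Sᶜ, ((j : ℝ) - ((a i).val : ℝ)) / (j : ℝ)) ∧
    ((∀ i ∈ S, a i = 0) → Cfun (uA a : (Fin n → Fin j) → Fin k) S = 0) := by
  refine ⟨fun h => ?_, cfun_uA_of_forall_eq_zero⟩
  rw [cfun_uA_of_exists_ne_zero hk h, card_filter_forall_notMem_le, prod_div_distrib, prod_const]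
  have hpow : (j : ℝ) ^ n = j ^ #S * j ^ #Sᶜ := by
    rw [← pow_add, card_add_card_compl, Fintype.card_fin]
  rw [hpow, Nat.cast_mul, Nat.cast_pow, Nat.cast_prod,
    mul_div_mul_left _ _ (pow_ne_zero _ (Nat.cast_ne_zero.2 (NeZero.ne j)))]
  exact congrArg (· / _) (prod_congr rfl fun i _ => Nat.cast_sub (a i).isLt.le)

theorem stmt14 {n j k : ℕ} [NeZero j] [NeZero k] (hj : 2 ≤ j) (hk : 2 ≤ k)
    (a : Fin n → Fin j) (ha : a ≠ 0) (S : Finset (Fin n)) (hS : S ≠ univ) :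
    ((∃ i ∈ S, a i ≠ 0) →
        Cfun (uA a : (Fin n → Fin j) → Fin k) S =
          ∏ i ∈ Sᶜ, ((j : ℝ) - ((a i).val : ℝ)) / (j : ℝ)) ∧
    ((∀ i ∈ S, a i = 0) → Cfun (uA a : (Fin n → Fin j) → Fin k) S = 0) :=
  stmt14_general hk a S
end

section
/- For every coalition C ⊆ N, the average game of w^C lies in the span of the unanimity games γ_S for S ⊆ C: there exist real numbers (y_S)_{S⊆C} such that ŵ^C = Σ_{S⊆C} y_S γ_S as TU games on N. -/
open Finset BigOperators

attribute [local instance] Classical.propDecidable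

/-!
`w^C` depends only on the coordinates in `C`, on which `((j-1)_T, x_{-T})` and
`((j-1)_{C ∩ T}, x_{-(C ∩ T)})` agree (likewise for `0`), so the average game satisfies
`ŵ^C(T) = ŵ^C(C ∩ T)`. Möbius inversion on the Boolean lattice writes any set function as
`f T = ∑_{S ⊆ T} y S`; for `f` with `f T = f (C ∩ T)` this becomes
`f T = ∑_{S ⊆ C ∩ T} y S = ∑_{S ⊆ C} y S γ_S(T)`.
-/

open IncidenceAlgebra in
theorem sum_Iic_sum_Iic_mu_mul {𝕜 α : Type*} [Ring 𝕜] [PartialOrder α] [OrderBot α]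
    [LocallyFiniteOrder α] [DecidableEq α] (g : α → 𝕜) (x : α) :
    ∑ y ∈ Iic x, ∑ z ∈ Iic y, mu 𝕜 z y * g z = g x := by
  rw [sum_comm' (t' := Iic x) (s' := fun z => Icc z x)
    (fun y z => by simp only [mem_Iic, mem_Icc]; grind [le_trans])]
  simp_rw [← sum_mul, sum_Icc_mu_right, ite_mul, one_mul, zero_mul]
  simp

open IncidenceAlgebra in
theorem exists_eq_sum_powerset_mul_gammaTU {n : ℕ} {f : Finset (Fin n) → ℝ} {C : Finset (Fin n)}
    (hf : ∀ T, f T = f (C ∩ T)) :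
    ∃ y : Finset (Fin n) → ℝ, ∀ T, f T = ∑ S ∈ C.powerset, y S * gammaTU S T := by
  refine ⟨fun S => ∑ R ∈ Iic S, mu ℝ R S * f R, fun T => ?_⟩
  have hpowerset : (C ∩ T).powerset = C.powerset.filter (· ⊆ T) := by
    ext S
    simp only [mem_powerset, mem_filter, subset_inter_iff]
  rw [hf, ← sum_Iic_sum_Iic_mu_mul f (C ∩ T), Iic_eq_powerset, hpowerset, sum_filter]
  simp only [gammaTU, mul_ite, mul_one, mul_zero]

theorem wCgame_congr {n j k : ℕ} [NeZero j] [NeZero k] {C : Finset (Fin n)}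
    {x x' : Fin n → Fin j} (h : ∀ i ∈ C, x i = x' i) : (wCgame C x : Fin k) = wCgame C x' := by
  unfold wCgame uA
  refine if_congr (forall_congr' fun i => ?_) rfl rfl
  by_cases hi : i ∈ C
  · simp only [hi, if_true, h i hi]
  · simp only [hi, if_false, Fin.zero_le]

theorem Cfun_wCgame_inter {n j k : ℕ} [NeZero j] [NeZero k] (C T : Finset (Fin n)) :
    Cfun (wCgame C : (Fin n → Fin j) → Fin k) T =
      Cfun (wCgame C : (Fin n → Fin j) → Fin k) (C ∩ T) := by
  have hmer : ∀ (c : Fin j) (x : Fin n → Fin j), ∀ i ∈ C, mer T c x i = mer (C ∩ T) c x i :=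
    fun c x i hi => by simp only [mer, mem_inter, hi, true_and]
  unfold Cfun
  simp only [wCgame_congr (k := k) (hmer _ _)]

theorem stmt15_general {n j k : ℕ} [NeZero j] [NeZero k]
    (C : Finset (Fin n)) :
    ∃ y : Finset (Fin n) → ℝ,
      ∀ T : Finset (Fin n),
        Cfun (wCgame C : (Fin n → Fin j) → Fin k) T =
          ∑ S ∈ C.powerset, y S * gammaTU S T :=
  exists_eq_sum_powerset_mul_gammaTU (Cfun_wCgame_inter C)

theorem stmt15 {n j k : ℕ} [NeZero j] [NeZero k] (hj : 2 ≤ j) (hk : 2 ≤ k)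
    (C : Finset (Fin n)) :
    ∃ y : Finset (Fin n) → ℝ,
      ∀ T : Finset (Fin n),
        Cfun (wCgame C : (Fin n → Fin j) → Fin k) T =
          ∑ S ∈ C.powerset, y S * gammaTU S T :=
  stmt15_general C
end
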